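/- Let 0 < α < 1, let F be α-SR, and let r > 0 be a monopoly price of F, i.e. φ(r) = 0. Then ∫₀^r (1−F(v)) dv ≤ (1−F(r)) · (r/α) · (α^{−α/(1−α)} − 1). -/

import Mathlib

open MeasureTheory Real Filter

/-- The virtual valuation function `φ(v) = v − (1 − F(v))/f(v)`. -/
noncomputable def virtualValue (F f : ℝ → ℝ) (v : ℝ) : ℝ := v - (1 - F v) / f v

/-- The hazard rate `h(v) = f(v)/(1 − F(v))`. -/
noncomputable def hazardRate (F f : ℝ → ℝ) (v : ℝ) : ℝ := f v / (1 - F v)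

/-- `F` is the CDF of a continuous distribution supported on `[0, ∞)`,
with density `f = F'` that is positive wherever `F < 1`. -/
structure IsCDF (F f : ℝ → ℝ) : Prop where
  zero : F 0 = 0
  mono : Monotone F
  le_one : ∀ v, F v ≤ 1
  tendsto_one : Tendsto F atTop (nhds 1)
  hasDeriv : ∀ v, 0 ≤ v → HasDerivAt F (f v) v
  f_pos : ∀ v, 0 ≤ v → F v < 1 → 0 < f v

/-- `F` is `α`-strongly regular: `φ(y) − φ(x) ≥ α (y − x)` for all `x < y` in the support. -/
def IsAlphaSR (α : ℝ) (F f : ℝ → ℝ) : Prop :=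
  ∀ x y, 0 ≤ x → x < y → F y < 1 →
    virtualValue F f y - virtualValue F f x ≥ α * (y - x)

open Set

/-!
On `[0, r]`, `α`-strong regularity together with `φ(r) = 0` gives `φ(v) ≤ -α (r - v)`, i.e.
`f(v) · c(v) ≤ 1 - F(v)` with `c(v) = α r + (1 - α) v`. This makes `(1 - F) · c^{1/(1-α)}`
nondecreasing, so `1 - F(v) ≤ (1 - F(r)) (r / c(v))^{1/(1-α)}`, and integrating this power of an
affine function gives the bound.
-/

theorem monotoneOn_mul_rpow_inv_of_le {S s c : ℝ → ℝ} {k a b : ℝ} (hk : k ≠ 0)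
    (hS : ∀ v ∈ Icc a b, HasDerivAt S (s v) v) (hc : ∀ v ∈ Icc a b, HasDerivAt c k v)
    (hc_pos : ∀ v ∈ Icc a b, 0 < c v) (hle : ∀ v ∈ Icc a b, -s v * c v ≤ S v) :
    MonotoneOn (fun v => S v * c v ^ k⁻¹) (Icc a b) := by
  have hderiv : ∀ v ∈ Icc a b, HasDerivAt (fun v => S v * c v ^ k⁻¹)
      (c v ^ (k⁻¹ - 1) * (s v * c v + S v)) v := by
    intro v hv
    have hcv := (hc_pos v hv).ne'
    refine ((hS v hv).mul ((hc v hv).rpow_const (p := k⁻¹) (Or.inl hcv))).congr_deriv ?_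
    rw [mul_inv_cancel₀ hk, one_mul, Real.rpow_sub_one hcv]
    field_simp [hcv]
  refine monotoneOn_of_hasDerivWithinAt_nonneg (convex_Icc a b)
    (fun v hv => (hderiv v hv).continuousAt.continuousWithinAt)
    (fun v hv => (hderiv v (interior_subset hv)).hasDerivWithinAt) fun v hv => ?_
  have hv' := interior_subset hv
  exact mul_nonneg (Real.rpow_nonneg (hc_pos v hv').le _) (by linarith [hle v hv'])

theorem integral_add_mul_rpow {a k p r : ℝ} (hk : k ≠ 0) (hp : p ≠ -1) (ha : 0 < a)
    (hakr : 0 < a + k * r) :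
    ∫ v in (0:ℝ)..r, (a + k * v) ^ p =
      ((a + k * r) ^ (p + 1) - a ^ (p + 1)) / (k * (p + 1)) := by
  have h0 : (0:ℝ) ∉ uIcc a (a + k * r) := fun h =>
    (lt_min ha hakr).not_ge (by simpa using h.1)
  rw [intervalIntegral.integral_comp_add_mul (· ^ p) hk,
    integral_rpow (Or.inr ⟨hp, by simpa using h0⟩),
    smul_eq_mul, mul_zero, add_zero]
  field_simp

theorem intervalIntegrable_add_mul_rpow {a k p r : ℝ} (ha : 0 < a) (hk : 0 ≤ k) (hr : 0 ≤ r) :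
    IntervalIntegrable (fun v => (a + k * v) ^ p) volume 0 r := by
  refine ContinuousOn.intervalIntegrable ?_
  rw [uIcc_of_le hr]
  exact (continuousOn_const.add (continuousOn_const.mul continuousOn_id)).rpow_const
    fun v hv => Or.inl (add_pos_of_pos_of_nonneg ha (mul_nonneg hk hv.1)).ne'

theorem rpow_mul_integral_add_mul_rpow {α r : ℝ} (hα0 : 0 < α) (hα1 : α < 1) (hr : 0 < r) :
    r ^ (1 - α)⁻¹ * ∫ v in (0:ℝ)..r, (α * r + (1 - α) * v) ^ (-(1 - α)⁻¹) =
      r / α * (α ^ (-(α / (1 - α))) - 1) := by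
  have hk : 1 - α ≠ 0 := sub_ne_zero.2 hα1.ne'
  have hp : -(1 - α)⁻¹ ≠ -1 := fun h => hα0.ne' (by simpa using h)
  have hq : -(1 - α)⁻¹ + 1 = -(α / (1 - α)) := by field_simp; ring
  have hr1 : r ^ (1 - α)⁻¹ * r ^ (-(α / (1 - α))) = r := by
    rw [← Real.rpow_add hr, ← hq, add_neg_cancel_left, Real.rpow_one]
  have hden : (1 - α) * -(α / (1 - α)) = -α := by field_simp
  rw [integral_add_mul_rpow hk hp (by positivity) (by ring_nf; exact hr), hq,
    show α * r + (1 - α) * r = r by ring, Real.mul_rpow hα0.le hr.le, hden]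
  linear_combination (α ^ (-(α / (1 - α))) - 1) / α * hr1

theorem IsCDF.lt_one_of_virtualValue_eq_zero {F f : ℝ → ℝ} (hcdf : IsCDF F f) {r : ℝ}
    (hr : 0 < r) (hmon : virtualValue F f r = 0) : F r < 1 := by
  refine (hcdf.le_one r).lt_of_ne fun h => hr.ne' ?_
  simpa [virtualValue, h] using hmon

theorem IsAlphaSR.mul_affine_le_one_sub {α : ℝ} {F f : ℝ → ℝ} (hSR : IsAlphaSR α F f)
    (hcdf : IsCDF F f) {r v : ℝ} (hFr : F r < 1) (hmon : virtualValue F f r = 0)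
    (hv : v ∈ Icc 0 r) : f v * (α * r + (1 - α) * v) ≤ 1 - F v := by
  have hfv : 0 < f v := hcdf.f_pos v hv.1 ((hcdf.mono hv.2).trans_lt hFr)
  have hφ : virtualValue F f v ≤ -(α * (r - v)) := by
    rcases hv.2.lt_or_eq with hlt | rfl
    · linarith [hSR v r hv.1 hlt hFr]
    · simp [hmon]
  have hratio : α * r + (1 - α) * v ≤ (1 - F v) / f v := by
    unfold virtualValue at hφ
    linarith
  rwa [le_div_iff₀ hfv, mul_comm] at hratio

theorem IsAlphaSR.one_sub_le_of_virtualValue_eq_zero {α : ℝ} {F f : ℝ → ℝ}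
    (hSR : IsAlphaSR α F f) (hcdf : IsCDF F f) (hα0 : 0 < α) (hα1 : α < 1) {r v : ℝ}
    (hr : 0 < r) (hmon : virtualValue F f r = 0) (hv : v ∈ Icc 0 r) :
    1 - F v ≤ (1 - F r) * r ^ (1 - α)⁻¹ * (α * r + (1 - α) * v) ^ (-(1 - α)⁻¹) := by
  have hFr := hcdf.lt_one_of_virtualValue_eq_zero hr hmon
  set c : ℝ → ℝ := fun v => α * r + (1 - α) * v
  have hc_pos : ∀ v ∈ Icc 0 r, 0 < c v := fun v hv =>
    add_pos_of_pos_of_nonneg (mul_pos hα0 hr) (mul_nonneg (sub_nonneg.2 hα1.le) hv.1)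
  have hmono : MonotoneOn (fun v => (1 - F v) * c v ^ (1 - α)⁻¹) (Icc 0 r) :=
    monotoneOn_mul_rpow_inv_of_le (sub_ne_zero.2 hα1.ne')
      (fun v hv => (hcdf.hasDeriv v hv.1).const_sub 1)
      (fun v _ => (((hasDerivAt_id' v).const_mul (1 - α)).const_add (α * r)).congr_deriv
        (mul_one _))
      hc_pos (fun v hv => by simpa using hSR.mul_affine_le_one_sub hcdf hFr hmon hv)
  have hcr : c r = r := by ring
  have hle := hmono hv (right_mem_Icc.2 hr.le) hv.2
  simp only [hcr] at hle
  rwa [Real.rpow_neg (hc_pos v hv).le, ← div_eq_mul_inv,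
    le_div_iff₀ (Real.rpow_pos_of_pos (hc_pos v hv) _)]

theorem head_integral_bound (α : ℝ) (F f : ℝ → ℝ)
    (hα0 : 0 < α) (hα1 : α < 1)
    (hcdf : IsCDF F f) (hSR : IsAlphaSR α F f)
    (r : ℝ) (hr : 0 < r) (hmon : virtualValue F f r = 0) :
    (∫ v in (0:ℝ)..r, (1 - F v)) ≤
      (1 - F r) * (r / α) * (α ^ (-(α / (1 - α)) : ℝ) - 1) := by
  calc (∫ v in (0:ℝ)..r, (1 - F v))
      ≤ ∫ v in (0:ℝ)..r,
          (1 - F r) * r ^ (1 - α)⁻¹ * (α * r + (1 - α) * v) ^ (-(1 - α)⁻¹) :=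
        intervalIntegral.integral_mono_on hr.le
          (intervalIntegrable_const.sub hcdf.mono.intervalIntegrable)
          ((intervalIntegrable_add_mul_rpow (mul_pos hα0 hr) (sub_nonneg.2 hα1.le)
            hr.le).const_mul _)
          fun v hv => hSR.one_sub_le_of_virtualValue_eq_zero hcdf hα0 hα1 hr hmon hv
    _ = (1 - F r) * (r ^ (1 - α)⁻¹ *
          ∫ v in (0:ℝ)..r, (α * r + (1 - α) * v) ^ (-(1 - α)⁻¹)) := by
        rw [intervalIntegral.integral_const_mul, mul_assoc]
    _ = (1 - F r) * (r / α) * (α ^ (-(α / (1 - α)) : ℝ) - 1) := by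
        rw [rpow_mul_integral_add_mul_rpow hα0 hα1 hr, mul_assoc]
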